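/- Let A be a finite set, P_0 a probability distribution on A, and X_1, …, X_n i.i.d. random variables with law P_0. Let P̂_t(a) = (1/t) Σ_{s=1}^t 1{X_s = a} be the empirical distribution after t observations. Then for every δ > 0, P(∃ t ∈ {1,…,n} : t · KL(P̂_t; P_0) ≥ δ) ≤ 2e (δ log n + |A|) exp(−δ / |A|). -/

import Mathlib

/-!
Since `KL(P; Q) ≤ ∑ₐ kl(P a, Q a)` (Gibbs' inequality for the complementary masses `1 - P a`,
`1 - Q a`), the event forces `t · kl(P̂ₜ(a), P₀(a)) ≥ x := δ / |A|` for some letter `a`, so it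
suffices to show `P(∃ t ≤ n, t · kl(μ̂ₜ, p) ≥ x) ≤ 2 (x log n + 1) e^{1-x}` for i.i.d. Bernoulli(p)
trials `W` (for `x ≤ 1` the claimed bound exceeds `1`). Lower deviations of `W` are upper deviations
of `1 - W`. Upper deviations are peeled into the slices `r^i ≤ t ≤ r^(i+1)`, `r = x / (x - 1)`, of
which at most `x log n + 1` meet `[1, n]`. On a slice, let `q ≥ p` solve `kl(q, p) = x / r^(i+1)`:
by convexity of `kl(·, p)` every deviating time has empirical mean at least `q`, hence at the tilt
`λ` attaining `kl(q, p) = λ q - log E e^{λ W}` the exponential martingale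
`exp (λ Sₜ - t log E e^{λ W})` exceeds `e^{x-1}`; by Doob's maximal inequality (Ville's
inequality) this has probability at most `e^{1-x}`.
-/

open scoped Classical

open MeasureTheory ProbabilityTheory Real Set
open scoped ENNReal

/-- Kullback–Leibler divergence `KL(P; Q) = Σ_x P(x) log (P(x)/Q(x))` between two
probability mass functions on a finite set, with the conventions `0 log 0 = 0` and
`p log(p/0) = +∞` for `p > 0` (so `KL = +∞` unless `P ≪ Q`). -/
noncomputable def klFin {A : Type*} [Fintype A] (P Q : A → ℝ) : ℝ≥0∞ :=
  if ∀ a, Q a = 0 → P a = 0 then ENNReal.ofReal (∑ a, P a * Real.log (P a / Q a))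
  else ⊤

noncomputable def binKL (q p : ℝ) : ℝ :=
  q * log (q / p) + (1 - q) * log ((1 - q) / (1 - p))

section binKL

variable {p q μ : ℝ}

lemma binKL_one_sub_one_sub (q p : ℝ) : binKL (1 - q) (1 - p) = binKL q p := by
  simp only [binKL, sub_sub_cancel]
  ring

lemma binKL_one_left (p : ℝ) : binKL 1 p = -log p := by
  simp [binKL, log_inv]

-- at `p = 1` the term `(1 - q) * log ((1 - q) / 0)` is the junk value `0`, not `+∞`
lemma binKL_one_right_nonpos (hq0 : 0 ≤ q) (hq1 : q ≤ 1) : binKL q 1 ≤ 0 := by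
  simpa [binKL] using mul_nonpos_of_nonneg_of_nonpos hq0 (log_nonpos hq0 hq1)

lemma binKL_self (p : ℝ) : binKL p p = 0 := by
  rcases eq_or_ne p 0 with rfl | hp0
  · simp [binKL]
  rcases eq_or_ne p 1 with rfl | hp1
  · simp [binKL]
  simp [binKL, div_self hp0, div_self (sub_ne_zero.mpr (Ne.symm hp1))]

lemma binKL_eq_klFun (hp0 : 0 < p) (hp1 : p < 1) (q : ℝ) :
    binKL q p = p * InformationTheory.klFun (q / p) +
      (1 - p) * InformationTheory.klFun ((1 - q) / (1 - p)) := by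
  have : 1 - p ≠ 0 := by linarith
  simp only [binKL, InformationTheory.klFun]
  field_simp
  ring

lemma binKL_nonneg (hp0 : 0 < p) (hp1 : p < 1) (hq0 : 0 ≤ q) (hq1 : q ≤ 1) : 0 ≤ binKL q p := by
  rw [binKL_eq_klFun hp0 hp1]
  have := InformationTheory.klFun_nonneg (div_nonneg hq0 hp0.le)
  have := InformationTheory.klFun_nonneg (div_nonneg (sub_nonneg.mpr hq1) (sub_pos.mpr hp1).le)
  have := sub_pos.mpr hp1
  positivity

lemma continuous_binKL_left (hp0 : 0 < p) (hp1 : p < 1) : Continuous fun q => binKL q p := by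
  simp_rw [binKL_eq_klFun hp0 hp1]
  fun_prop

lemma convexOn_binKL_left (hp0 : 0 < p) (hp1 : p < 1) :
    ConvexOn ℝ (Icc 0 1) fun q => binKL q p := by
  simp_rw [binKL_eq_klFun hp0 hp1]
  have h1 := (InformationTheory.convexOn_klFun.comp_affineMap
    (LinearMap.mulLeft ℝ p⁻¹).toAffineMap).smul hp0.le
  have h2 := (InformationTheory.convexOn_klFun.comp_affineMap
    (AffineMap.const ℝ ℝ (1 - p)⁻¹ - (LinearMap.mulLeft ℝ (1 - p)⁻¹).toAffineMap)).smul
    (sub_pos.mpr hp1).le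
  refine ((h1.subset ?_ (convex_Icc 0 1)).add (h2.subset ?_ (convex_Icc 0 1))).congr ?_
  · intro q hq
    simpa using mul_nonneg (inv_nonneg.mpr hp0.le) hq.1
  · intro q hq
    simpa [← mul_one_sub] using
      mul_nonneg (inv_pos.mpr (sub_pos.mpr hp1)).le (sub_nonneg.mpr hq.2)
  · intro q hq
    simp [div_eq_inv_mul, mul_sub]

lemma le_of_binKL_le (hp0 : 0 < p) (hp1 : p < 1) (hpq : p ≤ q) (hq1 : q ≤ 1) (hpμ : p ≤ μ)
    (hpos : 0 < binKL q p) (hle : binKL q p ≤ binKL μ p) : q ≤ μ := by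
  by_contra! hμq
  have hpq' : 0 < q - p := by linarith
  -- `μ` is a convex combination of `p` and `q`, and `binKL p p = 0`
  have hconv := (convexOn_binKL_left hp0 hp1).2 ⟨hp0.le, hp1.le⟩ ⟨hp0.le.trans hpq, hq1⟩
    (div_nonneg (sub_nonneg.mpr hμq.le) hpq'.le) (div_nonneg (sub_nonneg.mpr hpμ) hpq'.le)
    (by rw [← add_div, div_eq_one_iff_eq hpq'.ne']; ring)
  have hcomb : (q - μ) / (q - p) * p + (μ - p) / (q - p) * q = μ := by
    field_simp
    ring
  have hθ : (μ - p) / (q - p) < 1 := (div_lt_one hpq').mpr (by linarith)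
  simp only [smul_eq_mul, binKL_self, mul_zero, zero_add, hcomb] at hconv
  nlinarith

lemma binKL_eq_mul_sub_log (hp0 : 0 < p) (hp1 : p < 1) (hq0 : 0 < q) (hq1 : q < 1) {l : ℝ}
    (hl : exp l = q * (1 - p) / (p * (1 - q))) :
    binKL q p = l * q - log (1 - p + p * exp l) := by
  have h1p : 1 - p ≠ 0 := by linarith
  have h1q : 1 - q ≠ 0 := by linarith
  have hl' : l = log q + log (1 - p) - log p - log (1 - q) := by
    rw [← log_exp l, hl, log_div (by positivity) (by positivity), log_mul hq0.ne' h1p,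
      log_mul hp0.ne' h1q]
    ring
  have hbase : 1 - p + p * exp l = (1 - p) / (1 - q) := by
    rw [hl]
    field_simp
    ring
  rw [hbase, binKL, log_div hq0.ne' hp0.ne', log_div h1q h1p, log_div h1p h1q, hl']
  ring

end binKL

namespace ProbabilityTheory.iIndepFun

open Finset

variable {Ω : Type*} {mΩ : MeasurableSpace Ω} {P : Measure Ω}

theorem integrable_prod {V : ℕ → Ω → ℝ} (hV : ∀ s, Measurable (V s))
    (hindep : iIndepFun V P) (hint : ∀ s, Integrable (V s) P) (F : Finset ℕ) :
    Integrable (∏ s ∈ F, V s) P := by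
  induction F using Finset.induction_on with
  | empty =>
    have := hindep.isProbabilityMeasure
    exact integrable_const 1
  | insert j F hj ih =>
    rw [prod_insert hj]
    exact (hindep.indepFun_finsetProd_of_notMem hV hj).symm.integrable_mul (hint j) ih

theorem martingale_prod_range {V : ℕ → Ω → ℝ} (hV : ∀ s, StronglyMeasurable (V s))
    (hindep : iIndepFun V P) (hint : ∀ s, Integrable (V s) P) (hmean : ∀ s, P[V s] = 1) :
    Martingale (fun t ω => ∏ s ∈ range (t + 1), V s ω) (Filtration.natural V hV) P := by
  have := hindep.isProbabilityMeasure
  have hadapted : StronglyAdapted (Filtration.natural V hV)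
      fun t ω => ∏ s ∈ range (t + 1), V s ω := fun t =>
    stronglyMeasurable_fun_prod _ fun s hs => (Filtration.stronglyAdapted_natural hV s).mono
      (Filtration.mono _ (Nat.lt_succ_iff.mp (mem_range.mp hs)))
  have hprod_int : ∀ t, Integrable (fun ω => ∏ s ∈ range (t + 1), V s ω) P := fun t => by
    simpa only [prod_fn] using hindep.integrable_prod (fun s => (hV s).measurable) hint _
  refine martingale_nat hadapted hprod_int fun t => ?_
  have hsplit : (fun ω => ∏ s ∈ range (t + 1 + 1), V s ω) =
      (fun ω => ∏ s ∈ range (t + 1), V s ω) * V (t + 1) := by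
    ext ω
    simp [prod_range_succ]
  rw [hsplit]
  filter_upwards [condExp_mul_of_stronglyMeasurable_left (hadapted t)
      (hsplit ▸ hprod_int (t + 1)) (hint (t + 1)),
    hindep.condExp_natural_ae_eq_of_lt hV (Nat.lt_succ_self t)] with ω h1 h2
  simp [h1, h2, hmean]

theorem mul_measure_exists_le_prod_le {V : ℕ → Ω → ℝ} (hV : ∀ s, Measurable (V s))
    (hindep : iIndepFun V P) (hnonneg : ∀ s, 0 ≤ V s) (hint : ∀ s, Integrable (V s) P)
    (hmean : ∀ s, P[V s] = 1) (ε : NNReal) (M : ℕ) :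
    ε * P {ω | ∃ t ≤ M, (ε : ℝ) ≤ ∏ s ∈ range t, V s ω} ≤ 1 := by
  have := hindep.isProbabilityMeasure
  rcases le_or_gt ε 1 with hε | hε
  · exact mul_le_one' (by exact_mod_cast hε) prob_le_one
  have hmart := hindep.martingale_prod_range (fun s => (hV s).stronglyMeasurable) hint hmean
  have hsub : {ω | ∃ t ≤ M, (ε : ℝ) ≤ ∏ s ∈ range t, V s ω} ⊆
      {ω | (ε : ℝ) ≤ (range (M + 1)).sup' nonempty_range_add_one
        fun k => ∏ s ∈ range (k + 1), V s ω} := by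
    rintro ω ⟨_ | k, htM, ht⟩
    · rw [prod_range_zero, NNReal.coe_le_one] at ht
      exact absurd hε ht.not_gt
    · exact le_sup'_of_le (fun k => ∏ s ∈ range (k + 1), V s ω)
        (mem_range.mpr (by omega : k < M + 1)) ht
  calc (ε : ℝ≥0∞) * P _ ≤ ε * P {ω | (ε : ℝ) ≤ (range (M + 1)).sup' nonempty_range_add_one
        fun k => ∏ s ∈ range (k + 1), V s ω} := by gcongr
    _ ≤ ENNReal.ofReal (∫ ω, ∏ s ∈ range (M + 1), V s ω ∂P) :=
      (maximal_ineq hmart.submartingale (fun t ω => prod_nonneg fun s _ => hnonneg s ω) M).trans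
        (ENNReal.ofReal_le_ofReal (setIntegral_le_integral (hmart.integrable M)
          (ae_of_all _ fun ω => prod_nonneg fun s _ => hnonneg s ω)))
    _ = 1 := by
      rw [← setIntegral_univ, ← hmart.setIntegral_eq (Nat.zero_le M) MeasurableSet.univ]
      simp [hmean]

theorem measure_exists_le_mul_sum_sub_le {W : ℕ → Ω → ℝ} (hW : ∀ s, Measurable (W s))
    (hindep : iIndepFun W P) {l φ : ℝ} (hint : ∀ s, Integrable (fun ω => exp (l * W s ω)) P)
    (hmgf : ∀ s, mgf (W s) P l = exp φ) (c : ℝ) (M : ℕ) :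
    P {ω | ∃ t ≤ M, c ≤ l * ∑ s ∈ range t, W s ω - t * φ} ≤ ENNReal.ofReal (exp (-c)) := by
  set V : ℕ → Ω → ℝ := fun s ω => exp (l * W s ω - φ)
  have hV : ∀ s, Measurable (V s) := fun s => (((hW s).const_mul l).sub_const φ).exp
  have hmean : ∀ s, P[V s] = 1 := fun s => by
    simp_rw [V, exp_sub, integral_div]
    rw [← mgf, hmgf, div_self (exp_pos φ).ne']
  have hville := (hindep.comp (fun _ w => exp (l * w - φ))
      fun _ => ((measurable_id.const_mul l).sub_const φ).exp).mul_measure_exists_le_prod_le hV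
    (fun s ω => (exp_pos _).le) (fun s => by simpa [V, exp_sub] using (hint s).div_const (exp φ))
    hmean (exp c).toNNReal M
  have hprod : ∀ t ω, ∏ s ∈ range t, V s ω = exp (l * ∑ s ∈ range t, W s ω - t * φ) := by
    intro t ω
    rw [← exp_sum, sum_sub_distrib, mul_sum]
    simp
  simp_rw [hprod, Real.coe_toNNReal _ (exp_pos c).le, exp_le_exp] at hville
  rw [exp_neg, ENNReal.ofReal_inv_of_pos (exp_pos c), ENNReal.le_inv_iff_mul_le, mul_comm]
  exact hville

end ProbabilityTheory.iIndepFun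

section Bernoulli

variable {Ω : Type*} {mΩ : MeasurableSpace Ω} {P : Measure Ω}

structure IsIIDBernoulli (W : ℕ → Ω → ℝ) (p : ℝ) (P : Measure Ω) : Prop where
  measurable : ∀ s, Measurable (W s)
  iIndepFun : iIndepFun W P
  zero_or_one : ∀ s ω, W s ω = 0 ∨ W s ω = 1
  measure_eq_one : ∀ s, P {ω | W s ω = 1} = ENNReal.ofReal p

namespace IsIIDBernoulli

open Finset

variable {W : ℕ → Ω → ℝ} {p : ℝ}

lemma le_one (hW : IsIIDBernoulli W p P) : p ≤ 1 := by
  have := hW.iIndepFun.isProbabilityMeasure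
  simpa [hW.measure_eq_one 0] using prob_le_one (μ := P) (s := {ω | W 0 ω = 1})

lemma measurableSet_eq_one (hW : IsIIDBernoulli W p P) (s : ℕ) :
    MeasurableSet {ω | W s ω = 1} :=
  hW.measurable s (measurableSet_singleton 1)

lemma eq_indicator (hW : IsIIDBernoulli W p P) (s : ℕ) :
    W s = {ω | W s ω = 1}.indicator 1 := by
  ext ω
  rcases hW.zero_or_one s ω with h | h <;> simp [h]

lemma integrable (hW : IsIIDBernoulli W p P) (s : ℕ) : Integrable (W s) P := by
  have := hW.iIndepFun.isProbabilityMeasure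
  rw [hW.eq_indicator s]
  exact (integrable_const 1).indicator (hW.measurableSet_eq_one s)

lemma integral_eq (hW : IsIIDBernoulli W p P) (hp : 0 ≤ p) (s : ℕ) : P[W s] = p := by
  rw [hW.eq_indicator s, integral_indicator_one (hW.measurableSet_eq_one s),
    measureReal_def, hW.measure_eq_one s, ENNReal.toReal_ofReal hp]

lemma exp_mul_eq (hW : IsIIDBernoulli W p P) (l : ℝ) (s : ℕ) :
    (fun ω => exp (l * W s ω)) = fun ω => 1 + (exp l - 1) * W s ω := by
  ext ω
  rcases hW.zero_or_one s ω with h | h <;> simp [h]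

lemma integrable_exp_mul (hW : IsIIDBernoulli W p P) (l : ℝ) (s : ℕ) :
    Integrable (fun ω => exp (l * W s ω)) P := by
  have := hW.iIndepFun.isProbabilityMeasure
  rw [hW.exp_mul_eq l s]
  exact (integrable_const 1).add ((hW.integrable s).const_mul _)

lemma mgf_eq (hW : IsIIDBernoulli W p P) (hp : 0 ≤ p) (l : ℝ) (s : ℕ) :
    mgf (W s) P l = 1 - p + p * exp l := by
  have := hW.iIndepFun.isProbabilityMeasure
  rw [mgf, hW.exp_mul_eq l s, integral_add (integrable_const 1) ((hW.integrable s).const_mul _),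
    integral_const_mul, hW.integral_eq hp]
  simp only [integral_const, probReal_univ, smul_eq_mul, mul_one]
  ring

lemma one_sub (hW : IsIIDBernoulli W p P) (hp : 0 ≤ p) :
    IsIIDBernoulli (fun s ω => 1 - W s ω) (1 - p) P where
  measurable s := measurable_const.sub (hW.measurable s)
  iIndepFun := hW.iIndepFun.comp (fun _ w => 1 - w) fun _ => measurable_const.sub measurable_id
  zero_or_one s ω := by rcases hW.zero_or_one s ω with h | h <;> simp [h]
  measure_eq_one s := by
    have := hW.iIndepFun.isProbabilityMeasure
    have hset : {ω | 1 - W s ω = 1} = {ω | W s ω = 1}ᶜ := by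
      ext ω
      rcases hW.zero_or_one s ω with h | h <;> simp [h]
    rw [hset, prob_compl_eq_one_sub (hW.measurableSet_eq_one s),
      hW.measure_eq_one s, ENNReal.ofReal_sub _ hp, ENNReal.ofReal_one]

lemma sum_range_nonneg (hW : IsIIDBernoulli W p P) (t : ℕ) (ω : Ω) :
    0 ≤ ∑ s ∈ range t, W s ω :=
  sum_nonneg fun s _ => by rcases hW.zero_or_one s ω with h | h <;> simp [h]

lemma sum_range_le (hW : IsIIDBernoulli W p P) (t : ℕ) (ω : Ω) :
    ∑ s ∈ range t, W s ω ≤ t := by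
  simpa using sum_le_sum fun s (_ : s ∈ range t) =>
    show W s ω ≤ 1 by rcases hW.zero_or_one s ω with h | h <;> simp [h]

lemma measure_forall_lt_eq_one (hW : IsIIDBernoulli W p P) (hp : 0 ≤ p) (m : ℕ) :
    P {ω | ∀ s < m, W s ω = 1} = ENNReal.ofReal (p ^ m) := by
  have hset : {ω | ∀ s < m, W s ω = 1} = ⋂ s ∈ range m, W s ⁻¹' {1} := by
    ext ω; simp
  rw [hset, hW.iIndepFun.measure_inter_preimage_eq_mul _ fun _ _ => measurableSet_singleton 1,
    ENNReal.ofReal_pow hp]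
  simp [Set.preimage, hW.measure_eq_one]

theorem measure_exists_mul_le_sum_le (hW : IsIIDBernoulli W p P) (hp0 : 0 < p) {q : ℝ}
    (hpq : p ≤ q) (hq1 : q ≤ 1) (lo : ℝ) (M : ℕ) :
    P {ω | ∃ t ≤ M, lo ≤ t ∧ q * t ≤ ∑ s ∈ range t, W s ω} ≤
      ENNReal.ofReal (exp (-(lo * binKL q p))) := by
  rcases hq1.lt_or_eq with hq1 | rfl
  · -- `l` is the tilt at which `λ q - log E e^{λ W}` attains its supremum `binKL q p`
    have hp1 : p < 1 := hpq.trans_lt hq1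
    have hq0 : 0 < q := hp0.trans_le hpq
    set l := log (q * (1 - p) / (p * (1 - q)))
    have hl : exp l = q * (1 - p) / (p * (1 - q)) :=
      exp_log (div_pos (mul_pos hq0 (by linarith)) (mul_pos hp0 (by linarith)))
    have hl0 : 0 ≤ l := log_nonneg <| (one_le_div (mul_pos hp0 (by linarith))).mpr (by nlinarith)
    have hbase : 0 < 1 - p + p * exp l := by nlinarith [exp_pos l]
    have hkl := binKL_eq_mul_sub_log hp0 hp1 hq0 hq1 hl
    have hkl0 := binKL_nonneg hp0 hp1 hq0.le hq1.le
    refine le_trans (measure_mono ?_)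
      (hW.iIndepFun.measure_exists_le_mul_sum_sub_le hW.measurable (hW.integrable_exp_mul l)
        (fun s => (hW.mgf_eq hp0.le l s).trans (exp_log hbase).symm) (lo * binKL q p) M)
    rintro ω ⟨t, htM, hlo, hq⟩
    refine ⟨t, htM, ?_⟩
    rw [hkl] at hkl0 ⊢
    nlinarith
  · have hset : {ω | ∃ t ≤ M, lo ≤ t ∧ 1 * t ≤ ∑ s ∈ range t, W s ω} ⊆
        {ω | ∀ s < ⌈lo⌉₊, W s ω = 1} := by
      rintro ω ⟨t, -, hlo, ht⟩ s hs
      have hle : ∀ s ∈ range t, 0 ≤ 1 - W s ω := fun s _ => by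
        rcases hW.zero_or_one s ω with h | h <;> simp [h]
      have hsum : ∑ s ∈ range t, (1 - W s ω) = 0 := by
        simp only [sum_sub_distrib, sum_const, card_range, nsmul_eq_mul, mul_one]
        linarith [hW.sum_range_le t ω]
      have hst : s ∈ range t := mem_range.mpr (hs.trans_le (Nat.ceil_le.mpr hlo))
      linarith [(sum_eq_zero_iff_of_nonneg hle).mp hsum s hst]
    refine (measure_mono hset).trans ?_
    rw [hW.measure_forall_lt_eq_one hp0.le, binKL_one_left, ← rpow_natCast,
      rpow_def_of_pos hp0]
    gcongr
    nlinarith [log_nonpos hp0.le hpq, Nat.le_ceil lo]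

theorem measure_exists_binKL_dev_slice_le (hW : IsIIDBernoulli W p P) (hp0 : 0 < p)
    (hp1 : p < 1) {x lo hi : ℝ} (hx : 0 < x) (hhi : 0 < hi) (hslice : hi * (x - 1) ≤ lo * x) :
    P {ω | ∃ t : ℕ, lo ≤ t ∧ t ≤ hi ∧ p ≤ (∑ s ∈ range t, W s ω) / t ∧
        x ≤ t * binKL ((∑ s ∈ range t, W s ω) / t) p} ≤ ENNReal.ofReal (exp (1 - x)) := by
  have hmean : ∀ ω (t : ℕ), t ≤ hi → x ≤ t * binKL ((∑ s ∈ range t, W s ω) / t) p →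
      (0 : ℝ) < t ∧ x / hi ≤ binKL ((∑ s ∈ range t, W s ω) / t) p := by
    intro ω t hthi hxt
    have ht : (0 : ℝ) < t := Nat.cast_pos.mpr <| Nat.pos_of_ne_zero <| by
      rintro rfl
      rw [Nat.cast_zero, zero_mul] at hxt
      linarith
    refine ⟨ht, (div_le_iff₀ hhi).mpr ?_⟩
    nlinarith [binKL_nonneg hp0 hp1 (div_nonneg (hW.sum_range_nonneg t ω) ht.le)
      ((div_le_one ht).mpr (hW.sum_range_le t ω))]
  have hkl1 : 0 < binKL 1 p := by rw [binKL_one_left]; linarith [log_neg hp0 hp1]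
  by_cases hreach : x / hi ≤ binKL 1 p
  · obtain ⟨q, ⟨hpq, hq1⟩, hq⟩ := intermediate_value_Icc hp1.le
      (continuous_binKL_left hp0 hp1).continuousOn
      ⟨by rw [binKL_self]; positivity, hreach⟩
    replace hq : binKL q p = x / hi := hq
    have hqpos : 0 < binKL q p := by rw [hq]; positivity
    refine le_trans (measure_mono ?_)
      ((hW.measure_exists_mul_le_sum_le hp0 hpq hq1 lo ⌊hi⌋₊).trans ?_)
    · rintro ω ⟨t, hlo, hthi, hpμ, hxt⟩
      obtain ⟨ht, hμ⟩ := hmean ω t hthi hxt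
      have hqμ := le_of_binKL_le hp0 hp1 hpq hq1 hpμ hqpos (hq.trans_le hμ)
      exact ⟨t, Nat.le_floor hthi, hlo, by rwa [le_div_iff₀ ht] at hqμ⟩
    · rw [hq]
      gcongr
      have : x - 1 ≤ lo * (x / hi) := by rw [mul_div_assoc', le_div_iff₀ hhi]; linarith
      linarith
  · -- `binKL · p` is maximal at `1` on `[p, 1]`, so the event is empty
    refine le_trans (measure_mono (t := ∅) ?_) (by simp)
    rintro ω ⟨t, -, hthi, hpμ, hxt⟩
    obtain ⟨ht, hμ⟩ := hmean ω t hthi hxt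
    have h1μ := le_of_binKL_le hp0 hp1 hp1.le le_rfl hpμ hkl1 (by linarith)
    have hμ1 : (∑ s ∈ range t, W s ω) / t ≤ 1 := (div_le_one ht).mpr (hW.sum_range_le t ω)
    rw [le_antisymm hμ1 h1μ] at hμ
    exact hreach hμ

theorem measure_exists_binKL_upper_dev_le (hW : IsIIDBernoulli W p P) (hp0 : 0 < p) (hp1 : p < 1)
    {x : ℝ} (hx : 1 < x) (n : ℕ) :
    P {ω | ∃ t ≤ n, p ≤ (∑ s ∈ range t, W s ω) / t ∧
        x ≤ t * binKL ((∑ s ∈ range t, W s ω) / t) p} ≤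
      ENNReal.ofReal ((x * log n + 1) * exp (1 - x)) := by
  set r := x / (x - 1)
  have hx1 : 0 < x - 1 := by linarith
  have hr : r * (x - 1) = x := div_mul_cancel₀ x hx1.ne'
  have hr1 : 1 < r := (one_lt_div hx1).mpr (by linarith)
  have hlogr : x⁻¹ ≤ log r := by
    have := one_sub_inv_le_log_of_pos (zero_lt_one.trans hr1)
    rwa [inv_div, one_sub_div (by linarith : x ≠ 0), sub_sub_cancel, one_div] at this
  have hlogr0 : 0 < log r := log_pos hr1
  set D := ⌊log n / log r⌋₊ + 1
  have hcover : {ω | ∃ t ≤ n, p ≤ (∑ s ∈ range t, W s ω) / t ∧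
      x ≤ t * binKL ((∑ s ∈ range t, W s ω) / t) p} ⊆ ⋃ i ∈ range D,
      {ω | ∃ t : ℕ, r ^ i ≤ t ∧ t ≤ r ^ (i + 1) ∧ p ≤ (∑ s ∈ range t, W s ω) / t ∧
        x ≤ t * binKL ((∑ s ∈ range t, W s ω) / t) p} := by
    rintro ω ⟨t, htn, hpμ, hxt⟩
    have ht : (1 : ℝ) ≤ t := by
      rcases Nat.eq_zero_or_pos t with rfl | ht
      · rw [Nat.cast_zero, zero_mul] at hxt
        linarith
      · exact_mod_cast ht
    obtain ⟨i, hi, hi'⟩ := exists_nat_pow_near ht hr1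
    have hiD : i < D := by
      refine Nat.lt_succ_of_le (Nat.le_floor ?_)
      rw [le_div_iff₀ hlogr0, ← log_pow]
      exact log_le_log (pow_pos (zero_lt_one.trans hr1) i) (hi.trans (by exact_mod_cast htn))
    exact Set.mem_biUnion (mem_range.mpr hiD) ⟨t, hi, hi'.le, hpμ, hxt⟩
  refine (measure_mono hcover).trans ((measure_biUnion_finset_le _ _).trans ?_)
  calc ∑ i ∈ range D, P _
      ≤ ∑ i ∈ range D, ENNReal.ofReal (exp (1 - x)) := sum_le_sum fun i _ =>
        hW.measure_exists_binKL_dev_slice_le hp0 hp1 (by linarith) (by positivity)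
          (by rw [pow_succ, mul_assoc, hr])
    _ = ENNReal.ofReal (D * exp (1 - x)) := by
        rw [sum_const, card_range, nsmul_eq_mul, ENNReal.ofReal_mul (by positivity),
          ENNReal.ofReal_natCast]
    _ ≤ ENNReal.ofReal ((x * log n + 1) * exp (1 - x)) := by
        gcongr
        have hlogn : 0 ≤ log n := log_natCast_nonneg n
        have : log n / log r ≤ x * log n := by
          rw [div_le_iff₀ hlogr0]
          nlinarith [mul_le_mul_of_nonneg_left hlogr (by positivity : 0 ≤ x * log n),
            mul_inv_cancel₀ (by linarith : x ≠ 0)]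
        simp only [D, Nat.cast_add, Nat.cast_one]
        linarith [Nat.floor_le (div_nonneg hlogn hlogr0.le)]

theorem measure_exists_binKL_dev_le (hW : IsIIDBernoulli W p P) (hp0 : 0 ≤ p) {x : ℝ} (hx : 1 < x)
    (n : ℕ) :
    P {ω | ∃ t ≤ n, x ≤ t * binKL ((∑ s ∈ range t, W s ω) / t) p} ≤
      ENNReal.ofReal (2 * (x * log n + 1) * exp (1 - x)) := by
  have hmean : ∀ t ω, 0 ≤ (∑ s ∈ range t, W s ω) / t ∧ (∑ s ∈ range t, W s ω) / t ≤ 1 :=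
    fun t ω => ⟨div_nonneg (hW.sum_range_nonneg t ω) t.cast_nonneg,
      div_le_one_of_le₀ (hW.sum_range_le t ω) t.cast_nonneg⟩
  have hdegenerate : (p = 0 ∨ p = 1) → ∀ μ ∈ Icc (0 : ℝ) 1, binKL μ p ≤ 0 := by
    rintro (rfl | rfl) μ ⟨hμ0, hμ1⟩
    · rw [← binKL_one_sub_one_sub, sub_zero]
      exact binKL_one_right_nonpos (by linarith) (by linarith)
    · exact binKL_one_right_nonpos hμ0 hμ1
  by_cases hp : p = 0 ∨ p = 1
  · refine le_trans (measure_mono (t := ∅) ?_) (by simp)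
    rintro ω ⟨t, -, hxt⟩
    nlinarith [hdegenerate hp _ (hmean t ω), (t.cast_nonneg : (0 : ℝ) ≤ t)]
  obtain ⟨hp0', hp1'⟩ := not_or.mp hp
  have hp0 : 0 < p := hp0.lt_of_ne' hp0'
  have hp1 : p < 1 := hW.le_one.lt_of_ne hp1'
  have hsplit : {ω | ∃ t ≤ n, x ≤ t * binKL ((∑ s ∈ range t, W s ω) / t) p} ⊆
      {ω | ∃ t ≤ n, p ≤ (∑ s ∈ range t, W s ω) / t ∧
        x ≤ t * binKL ((∑ s ∈ range t, W s ω) / t) p} ∪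
      {ω | ∃ t ≤ n, 1 - p ≤ (∑ s ∈ range t, (1 - W s ω)) / t ∧
        x ≤ t * binKL ((∑ s ∈ range t, (1 - W s ω)) / t) (1 - p)} := by
    rintro ω ⟨t, htn, hxt⟩
    have ht : (t : ℝ) ≠ 0 := by
      rintro ht
      rw [ht, zero_mul] at hxt
      linarith
    have hflip : (∑ s ∈ range t, (1 - W s ω)) / t = 1 - (∑ s ∈ range t, W s ω) / t := by
      rw [sum_sub_distrib, sum_const, card_range, nsmul_one, sub_div, div_self ht]
    rcases le_total p ((∑ s ∈ range t, W s ω) / t) with h | h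
    · exact Or.inl ⟨t, htn, h, hxt⟩
    · refine Or.inr ⟨t, htn, ?_, ?_⟩
      · rw [hflip]; linarith
      · rwa [hflip, binKL_one_sub_one_sub]
  refine (measure_mono hsplit).trans ((measure_union_le _ _).trans ?_)
  have hupper := hW.measure_exists_binKL_upper_dev_le hp0 hp1 hx n
  have hlower := (hW.one_sub hp0.le).measure_exists_binKL_upper_dev_le (by linarith)
    (by linarith) hx n
  refine (add_le_add hupper hlower).trans_eq ?_
  rw [← ENNReal.ofReal_add (by positivity) (by positivity)]
  ring_nf

end IsIIDBernoulli

end Bernoulli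

lemma Real.sub_le_mul_log_div {a b : ℝ} (ha : 0 ≤ a) (hb : 0 ≤ b) (hab : b = 0 → a = 0) :
    a - b ≤ a * log (a / b) := by
  rcases ha.lt_or_eq with ha | rfl
  · have hb : 0 < b := hb.lt_of_ne' fun h => ha.ne' (hab h)
    have := one_sub_inv_le_log_of_pos (div_pos ha hb)
    rw [inv_div] at this
    calc a - b = a * (1 - b / a) := by field_simp
      _ ≤ a * log (a / b) := mul_le_mul_of_nonneg_left this ha.le
  · simp [hb]

lemma klFin_le_ofReal_sum_binKL {A : Type*} [Fintype A] {P Q : A → ℝ} (hP : ∀ a, 0 ≤ P a)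
    (hPsum : ∑ a, P a = 1) (hQ : ∀ a, 0 ≤ Q a) (hQsum : ∑ a, Q a = 1)
    (hPQ : ∀ a, Q a = 0 → P a = 0) :
    klFin P Q ≤ ENNReal.ofReal (∑ a, binKL (P a) (Q a)) := by
  rw [klFin, if_pos hPQ]
  refine ENNReal.ofReal_le_ofReal ?_
  simp only [binKL]
  rw [Finset.sum_add_distrib, le_add_iff_nonneg_right]
  have hcompl : ∀ R : A → ℝ, ∑ a, R a = 1 → ∀ a, 1 - R a = ∑ b ∈ Finset.univ.erase a, R b :=
    fun R hRsum a => by rw [Finset.sum_erase_eq_sub (Finset.mem_univ a), hRsum]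
  calc (0 : ℝ) = ∑ a, ((1 - P a) - (1 - Q a)) := by simp [Finset.sum_sub_distrib, hPsum, hQsum]
    _ ≤ _ := Finset.sum_le_sum fun a _ => sub_le_mul_log_div ?_ ?_ ?_
  · rw [hcompl P hPsum a]; exact Finset.sum_nonneg fun b _ => hP b
  · rw [hcompl Q hQsum a]; exact Finset.sum_nonneg fun b _ => hQ b
  · rw [hcompl P hPsum a, hcompl Q hQsum a]
    intro h
    exact Finset.sum_eq_zero fun b hb =>
      hPQ b ((Finset.sum_eq_zero_iff_of_nonneg fun c _ => hQ c).mp h b hb)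

lemma exists_le_mul_binKL_of_le_mul_klFin {A : Type*} [Fintype A] {P Q : A → ℝ}
    (hP : ∀ a, 0 ≤ P a) (hPsum : ∑ a, P a = 1) (hQ : ∀ a, 0 ≤ Q a) (hQsum : ∑ a, Q a = 1)
    (hPQ : ∀ a, Q a = 0 → P a = 0) {δ : ℝ} (hδ : 0 < δ) {t : ℕ}
    (h : ENNReal.ofReal δ ≤ t * klFin P Q) :
    ∃ a, δ / Fintype.card A ≤ t * binKL (P a) (Q a) := by
  have : Nonempty A := by
    by_contra hA
    simp [not_nonempty_iff.mp hA] at hPsum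
  have hk : (0 : ℝ) < Fintype.card A := by exact_mod_cast Fintype.card_pos
  have hsum : δ ≤ ∑ a, t * binKL (P a) (Q a) := by
    have := h.trans (mul_le_mul_right (klFin_le_ofReal_sum_binKL hP hPsum hQ hQsum hPQ) _)
    rw [← ENNReal.ofReal_natCast, ← ENNReal.ofReal_mul t.cast_nonneg,
      ENNReal.ofReal_le_ofReal_iff', Finset.mul_sum] at this
    exact this.resolve_right hδ.not_ge
  obtain ⟨a, -, ha⟩ := Finset.exists_le_of_sum_le (Finset.univ_nonempty (α := A))
    (f := fun _ => δ / Fintype.card A) (g := fun a => t * binKL (P a) (Q a)) (by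
      rw [Finset.sum_const, Finset.card_univ, nsmul_eq_mul, mul_div_cancel₀ _ hk.ne']
      exact hsum)
  exact ⟨a, ha⟩

lemma ProbabilityTheory.iIndepFun.isIIDBernoulli_ite {Ω A : Type*} {mΩ : MeasurableSpace Ω}
    {P : Measure Ω} [MeasurableSpace A] [MeasurableSingletonClass A] {X : ℕ → Ω → A}
    (hX : ∀ s, Measurable (X s)) (hindep : iIndepFun X P) {a : A} {p : ℝ}
    (hlaw : ∀ s, P {ω | X s ω = a} = ENNReal.ofReal p) :
    IsIIDBernoulli (fun s ω => if X s ω = a then 1 else 0) p P where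
  measurable s :=
    Measurable.ite (hX s (measurableSet_singleton a)) measurable_const measurable_const
  iIndepFun := hindep.comp (fun _ y => if y = a then (1 : ℝ) else 0)
    fun _ => Measurable.ite (measurableSet_singleton a) measurable_const measurable_const
  zero_or_one s ω := by by_cases h : X s ω = a <;> simp [h]
  measure_eq_one s := by
    rw [← hlaw s]
    congr 1
    ext ω
    by_cases h : X s ω = a <;> simp [h]

lemma sum_empirical_eq_one {A : Type*} [Fintype A] (Y : ℕ → A) {t : ℕ} (ht : t ≠ 0) :
    ∑ a, (∑ s ∈ Finset.range t, if Y s = a then (1 : ℝ) else 0) / t = 1 := by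
  rw [← Finset.sum_div, Finset.sum_comm]
  simp [ht]

lemma exists_le_mul_binKL_empirical {A : Type*} [Fintype A] {Y : ℕ → A} {Q : A → ℝ}
    (hQ : ∀ a, 0 ≤ Q a) (hQsum : ∑ a, Q a = 1) (hY : ∀ s, Q (Y s) ≠ 0) {δ : ℝ} (hδ : 0 < δ)
    {t : ℕ} (h : ENNReal.ofReal δ ≤
      t * klFin (fun a => (∑ s ∈ Finset.range t, if Y s = a then (1 : ℝ) else 0) / t) Q) :
    ∃ a, δ / Fintype.card A ≤
      t * binKL ((∑ s ∈ Finset.range t, if Y s = a then (1 : ℝ) else 0) / t) (Q a) := by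
  have ht : t ≠ 0 := by
    rintro rfl
    simp only [CharP.cast_eq_zero, zero_mul, nonpos_iff_eq_zero, ENNReal.ofReal_eq_zero] at h
    linarith
  refine exists_le_mul_binKL_of_le_mul_klFin (fun a => by positivity) (sum_empirical_eq_one Y ht)
    hQ hQsum (fun a ha => ?_) hδ h
  rw [Finset.sum_eq_zero fun s _ => if_neg fun (h : Y s = a) => hY s (h ▸ ha), zero_div]

lemma ae_forall_ne_zero_of_law {Ω A : Type*} {mΩ : MeasurableSpace Ω} {P : Measure Ω}
    [Countable A] {X : ℕ → Ω → A} {Q : A → ℝ}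
    (hlaw : ∀ s a, P {ω | X s ω = a} = ENNReal.ofReal (Q a)) :
    ∀ᵐ ω ∂P, ∀ s, Q (X s ω) ≠ 0 := by
  refine ae_all_iff.mpr fun s => ae_iff.mpr ?_
  simp only [ne_eq, not_not]
  change P (X s ⁻¹' {a | Q a = 0}) = 0
  rw [measure_preimage_eq_zero_iff_of_countable (Set.to_countable _)]
  intro a (ha : Q a = 0)
  rw [← ENNReal.ofReal_zero, ← ha]
  exact hlaw s a

theorem sanov_self_normalized_bound_general
    {Ω : Type*} {mΩ : MeasurableSpace Ω} {P : Measure Ω} [IsProbabilityMeasure P]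
    {A : Type*} [Fintype A] [MeasurableSpace A] [MeasurableSingletonClass A]
    (X : ℕ → Ω → A) (hmeas : ∀ t, Measurable (X t))
    (hindep : iIndepFun X P)
    (P0 : A → ℝ) (hP0 : ∀ a, 0 ≤ P0 a) (hP0sum : ∑ a, P0 a = 1)
    (hlaw : ∀ t a, P {ω | X t ω = a} = ENNReal.ofReal (P0 a))
    (δ : ℝ) (hδ : 0 < δ) (n : ℕ) :
    P {ω | ∃ t ∈ Finset.Icc 1 n,
        ENNReal.ofReal δ ≤ (t : ℝ≥0∞) *
          klFin (fun a => (∑ s ∈ Finset.range t, if X s ω = a then (1 : ℝ) else 0) / t) P0} ≤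
      ENNReal.ofReal (2 * Real.exp 1 * (δ * Real.log n + Fintype.card A) *
        Real.exp (-δ / Fintype.card A)) := by
  set k := Fintype.card A
  have hk : (1 : ℝ) ≤ k := by
    have : Nonempty A := by by_contra hA; simp [not_nonempty_iff.mp hA] at hP0sum
    exact_mod_cast Fintype.card_pos
  set x := δ / k
  have hbound : 2 * exp 1 * (δ * log n + k) * exp (-δ / k) =
      k * (2 * (x * log n + 1) * exp (1 - x)) := by
    rw [show δ = k * x from (mul_div_cancel₀ δ (by positivity)).symm, neg_div,
      mul_div_cancel_left₀ x (by positivity), sub_eq_add_neg, exp_add]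
    ring
  rw [hbound]
  rcases le_or_gt x 1 with hx | hx
  · refine prob_le_one.trans (ENNReal.one_le_ofReal.mpr ?_)
    have := one_le_exp (by linarith : 0 ≤ 1 - x)
    have : 0 ≤ x * log n := by positivity
    exact one_le_mul_of_one_le_of_one_le hk (by nlinarith)
  calc _ ≤ P (⋃ a, {ω | ∃ t ≤ n, x ≤ t * binKL
        ((∑ s ∈ Finset.range t, if X s ω = a then (1 : ℝ) else 0) / t) (P0 a)}) := by
        refine measure_mono_ae ?_
        filter_upwards [ae_forall_ne_zero_of_law hlaw] with ω hω ⟨t, ht, hδt⟩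
        obtain ⟨a, ha⟩ := exists_le_mul_binKL_empirical hP0 hP0sum hω hδ hδt
        exact Set.mem_iUnion.mpr ⟨a, t, (Finset.mem_Icc.mp ht).2, ha⟩
    _ ≤ ∑ a, _ := measure_iUnion_fintype_le _ _
    _ ≤ ∑ a : A, ENNReal.ofReal (2 * (x * log n + 1) * exp (1 - x)) :=
        Finset.sum_le_sum fun a _ =>
          (hindep.isIIDBernoulli_ite hmeas (hlaw · a)).measure_exists_binKL_dev_le (hP0 a) hx n
    _ = _ := by
        rw [Finset.sum_const, Finset.card_univ, nsmul_eq_mul, ← ENNReal.ofReal_natCast,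
          ← ENNReal.ofReal_mul (Nat.cast_nonneg _)]

/-- **Sanov-type self-normalized deviation bound for the empirical distribution** of
i.i.d. random variables `X₁, X₂, …` with values in a finite set `A` and common law `P₀`
(here `X s` denotes the `(s+1)`-th variable, so that the empirical distribution after `t`
observations is `P̂_t(a) = (Σ_{s<t} 1{X s = a})/t`):
`P(∃ t ∈ {1,…,n}, t · KL(P̂_t; P₀) ≥ δ) ≤ 2e (δ log n + |A|) exp(-δ/|A|)`. -/
theorem sanov_self_normalized_bound
    {Ω : Type*} {mΩ : MeasurableSpace Ω} {P : Measure Ω} [IsProbabilityMeasure P]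
    {A : Type*} [Fintype A] [MeasurableSpace A] [MeasurableSingletonClass A]
    (X : ℕ → Ω → A) (hmeas : ∀ t, Measurable (X t))
    (hindep : iIndepFun X P)
    (P0 : A → ℝ) (hP0 : ∀ a, 0 ≤ P0 a) (hP0sum : ∑ a, P0 a = 1)
    (hlaw : ∀ t a, P {ω | X t ω = a} = ENNReal.ofReal (P0 a))
    (δ : ℝ) (hδ : 0 < δ) (n : ℕ) (hn : 1 ≤ n) :
    P {ω | ∃ t ∈ Finset.Icc 1 n,
        ENNReal.ofReal δ ≤ (t : ℝ≥0∞) *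
          klFin (fun a => (∑ s ∈ Finset.range t, if X s ω = a then (1 : ℝ) else 0) / t) P0} ≤
      ENNReal.ofReal (2 * Real.exp 1 * (δ * Real.log n + Fintype.card A) *
        Real.exp (-δ / Fintype.card A)) :=
  sanov_self_normalized_bound_general (mΩ := mΩ) X hmeas hindep P0 hP0 hP0sum hlaw δ hδ n
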